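/- arXiv:2305.01919 — 2 statements merged into one kernel-verified Lean document; each statement's English description precedes it below -/
import Mathlib

section
/- Let q ≥ 2, let a be an integer with (q+1)/2 < a ≤ q, and set ā = q + 1 − a. If a q-graph H ⊆ Q(n,2) contains no (q+1)-copy of the triangle C₃, then |H_{a,a}| + |H_{ā,ā}| ≤ 2·⌊n²/4⌋, where H_{c,c} is the set of pairs {i,j} supporting a q-edge of H with both nonzero entries equal to c. -/
open Finset

/-- The support of a vector: indices of nonzero entries. -/
def qsupport {n : ℕ} (x : Fin n → ℕ) : Finset (Fin n) :=
  Finset.univ.filter (fun i => x i ≠ 0)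

/-- `Qset q n` : all q-edges, i.e. vectors in `{0,…,q}^n` with exactly two nonzero entries. -/
def Qset (q n : ℕ) : Finset (Fin n → ℕ) :=
  ((Finset.univ : Finset (Fin n → Fin (q+1))).image (fun f i => (f i : ℕ))).filter
    (fun x => (qsupport x).card = 2)

/-- The q-edge with support `{i,j}`, value `a` at `i` and `b` at `j`. -/
def qedge {n : ℕ} (i j : Fin n) (a b : ℕ) : Fin n → ℕ :=
  fun k => if k = i then a else if k = j then b else 0

/-- `H` is an `s`-copy of the graph `F`. -/
def IsSCopy {α : Type} [Fintype α] (s : ℕ) (F : SimpleGraph α) {n : ℕ}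
    (H : Finset (Fin n → ℕ)) : Prop :=
  ∃ ι : α → Fin n, Function.Injective ι ∧
    (∀ u v : α, F.Adj u v ↔ ∃ x ∈ H, qsupport x = {ι u, ι v}) ∧
    H.card = Nat.card F.edgeSet ∧
    ∀ x ∈ H, ∀ y ∈ H, x ≠ y → ∀ i, x i ≠ 0 → y i ≠ 0 → s ≤ x i + y i

/-- `H` contains an `s`-copy of `F`. -/
def ContainsSCopy {α : Type} [Fintype α] (s : ℕ) (F : SimpleGraph α) {n : ℕ}
    (H : Finset (Fin n → ℕ)) : Prop :=
  ∃ H' ⊆ H, IsSCopy s F H'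

/-- The ordinary Turán number `ex(n,F)`. -/
noncomputable def exNum {α : Type} [Fintype α] (n : ℕ) (F : SimpleGraph α) : ℕ :=
  sSup {m | ∃ G : SimpleGraph (Fin n),
    (¬ ∃ φ : F →g G, Function.Injective φ) ∧ m = Nat.card G.edgeSet}

/-- The Turán number `ex(n,F,q,s)`. -/
noncomputable def exQ {α : Type} [Fintype α] (n : ℕ) (F : SimpleGraph α) (q s : ℕ) : ℕ :=
  sSup {m | ∃ H ⊆ Qset q n, ¬ ContainsSCopy s F H ∧ m = H.card}

/-- The simple graph `H_{c,c}` of pairs supporting a q-edge of `H` with both entries `c`. -/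
def pairGraph {n : ℕ} (H : Finset (Fin n → ℕ)) (c : ℕ) : SimpleGraph (Fin n) :=
  SimpleGraph.fromRel (fun i j => ∃ x ∈ H, qsupport x = {i, j} ∧ x i = c ∧ x j = c)

lemma helper (c : ℕ) : c * c - c ≤ 4 * (c * c / 4) := by
  obtain ⟨k, rfl⟩ | ⟨k, rfl⟩ := Nat.even_or_odd c
  · have h : (k+k)*(k+k) = 4*(k*k) := by ring
    rw [h, Nat.mul_div_cancel_left _ (by norm_num)]
    omega
  · have h : (2*k+1)*(2*k+1) = 4*(k*k+k)+1 := by ring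
    rw [h]
    have h2 : (4*(k*k+k)+1)/4 = k*k+k := by omega
    rw [h2]; omega

lemma helper2 (d : ℕ) : (d+2)*(d+2)/4 = d*d/4 + (d+1) := by
  obtain ⟨k, rfl⟩ | ⟨k, rfl⟩ := Nat.even_or_odd d
  · have h : (k+k+2)*(k+k+2) = 4*((k+1)*(k+1)) := by ring
    have h' : (k+k)*(k+k) = 4*(k*k) := by ring
    rw [h, h', Nat.mul_div_cancel_left _ (by norm_num), Nat.mul_div_cancel_left _ (by norm_num)]
    ring
  · have h : (2*k+1+2)*(2*k+1+2) = 4*(k*k+3*k+2)+1 := by ring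
    have h' : (2*k+1)*(2*k+1) = 4*(k*k+k)+1 := by ring
    rw [h, h']
    omega

lemma key_count {n : ℕ} (Ga Gb : SimpleGraph (Fin n))
    [DecidableRel Ga.Adj] [DecidableRel Gb.Adj]
    (h1 : ∀ i j u, Ga.Adj i j → Ga.Adj u i → ¬ Ga.Adj u j)
    (h2 : ∀ i j u, Ga.Adj i j → Gb.Adj u i → ¬ Ga.Adj u j)
    (h3 : ∀ i j u, Ga.Adj i j → Ga.Adj u i → ¬ Gb.Adj u j) :
    ∀ m : ℕ, ∀ s : Finset (Fin n), s.card ≤ m →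
    ((s ×ˢ s).filter fun p => Ga.Adj p.1 p.2).card
      + ((s ×ˢ s).filter fun p => Gb.Adj p.1 p.2).card ≤ 4 * (s.card * s.card / 4) := by
  intro m
  induction m with
  | zero =>
    intro s hs
    rw [Finset.card_eq_zero.mp (Nat.le_zero.mp hs)]
    simp
  | succ m ih =>
    intro s hs
    by_cases hA : ∃ i ∈ s, ∃ j ∈ s, Ga.Adj i j
    · obtain ⟨i, hi, j, hj, hij⟩ := hA
      have hne : i ≠ j := hij.ne
      set t : Finset (Fin n) := s \ {i, j} with ht
      have hts : t ⊆ s := Finset.sdiff_subset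
      have hijs : ({i, j} : Finset (Fin n)) ⊆ s := by
        intro x hx; simp at hx; rcases hx with rfl | rfl <;> assumption
      have htcard : t.card = s.card - 2 := by
        rw [ht, Finset.card_sdiff_of_subset hijs, Finset.card_pair hne]
      have hc2 : 2 ≤ s.card := by
        calc 2 = ({i,j} : Finset (Fin n)).card := (Finset.card_pair hne).symm
        _ ≤ s.card := Finset.card_le_card hijs
      have hit : i ∉ t := by
        intro hmem; rw [ht] at hmem; simp at hmem
      have hjt : j ∉ t := by
        intro hmem; rw [ht] at hmem; simp at hmem
      have hmemt : ∀ x, x ∈ t ↔ x ∈ s ∧ x ≠ i ∧ x ≠ j := by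
        intro x
        rw [ht, Finset.mem_sdiff, Finset.mem_insert, Finset.mem_singleton]
        tauto
      -- decompose the filters
      have decomp : ∀ (G : SimpleGraph (Fin n)), ∀ _ : DecidableRel G.Adj,
          ((s ×ˢ s).filter fun p => G.Adj p.1 p.2).card
          = ((t ×ˢ t).filter fun p => G.Adj p.1 p.2).card
            + (((s ×ˢ s).filter fun p => G.Adj p.1 p.2).filter
                (fun p => ¬(p.1 ∈ t ∧ p.2 ∈ t))).card := by
        intro G hdec
        have h0 := Finset.card_filter_add_card_filter_not
          (s := (s ×ˢ s).filter fun p => G.Adj p.1 p.2)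
          (p := fun p => p.1 ∈ t ∧ p.2 ∈ t)
        have h1' : ((s ×ˢ s).filter fun p => G.Adj p.1 p.2).filter
            (fun p => p.1 ∈ t ∧ p.2 ∈ t) = (t ×ˢ t).filter fun p => G.Adj p.1 p.2 := by
          ext p
          simp only [Finset.mem_filter, Finset.mem_product]
          constructor
          · rintro ⟨⟨_, hadj⟩, hp1, hp2⟩; exact ⟨⟨hp1, hp2⟩, hadj⟩
          · rintro ⟨⟨hp1, hp2⟩, hadj⟩; exact ⟨⟨⟨hts hp1, hts hp2⟩, hadj⟩, hp1, hp2⟩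
        rw [h1'] at h0
        omega
      -- the touching parts
      set Ta := ((s ×ˢ s).filter fun p => Ga.Adj p.1 p.2).filter
          (fun p => ¬(p.1 ∈ t ∧ p.2 ∈ t)) with hTa
      set Tb := ((s ×ˢ s).filter fun p => Gb.Adj p.1 p.2).filter
          (fun p => ¬(p.1 ∈ t ∧ p.2 ∈ t)) with hTb
      set g : Fin n × Fin n → Fin n := fun p => if p.1 = i ∨ p.1 = j then p.2 else p.1 with hg
      have hgmem : ∀ (T : Finset (Fin n × Fin n)),
          T ⊆ (s ×ˢ s) → ∀ x ∈ T, g x ∈ s := by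
        intro T hT x hx
        have := hT hx
        rw [Finset.mem_product] at this
        by_cases hcase : x.1 = i ∨ x.1 = j <;> simp [hg, hcase, this.1, this.2]
      have hTasub : Ta ⊆ s ×ˢ s := by
        intro x hx; rw [hTa] at hx
        exact Finset.mem_of_mem_filter x (Finset.mem_of_mem_filter x hx)
      have hTbsub : Tb ⊆ s ×ˢ s := by
        intro x hx; rw [hTb] at hx
        exact Finset.mem_of_mem_filter x (Finset.mem_of_mem_filter x hx)
      have hfibA : Ta.card = ∑ u ∈ s, (Ta.filter (fun p => g p = u)).card :=
        Finset.card_eq_sum_card_fiberwise (hgmem Ta hTasub)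
      have hfibB : Tb.card = ∑ u ∈ s, (Tb.filter (fun p => g p = u)).card :=
        Finset.card_eq_sum_card_fiberwise (hgmem Tb hTbsub)
      -- structure of fibers
      have fibstruct : ∀ (G : SimpleGraph (Fin n)), ∀ _ : DecidableRel G.Adj,
          ∀ u ∈ t, ∀ p ∈ (((s ×ˢ s).filter fun q => G.Adj q.1 q.2).filter
              (fun q => ¬(q.1 ∈ t ∧ q.2 ∈ t))).filter (fun q => g q = u),
            (p = (u, i) ∧ G.Adj u i) ∨ (p = (i, u) ∧ G.Adj i u)
            ∨ (p = (u, j) ∧ G.Adj u j) ∨ (p = (j, u) ∧ G.Adj j u) := by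
        intro G hdec u hu p hp
        simp only [Finset.mem_filter, Finset.mem_product] at hp
        obtain ⟨⟨⟨⟨hp1, hp2⟩, hadj⟩, hnt⟩, hgp⟩ := hp
        have hut := (hmemt u).mp hu
        by_cases hcase : p.1 = i ∨ p.1 = j
        · have hp2u : p.2 = u := by rw [hg] at hgp; simpa [hcase] using hgp
          rcases hcase with h | h
          · right; left
            refine ⟨?_, ?_⟩
            · rw [← h, ← hp2u]
            · rw [← h, ← hp2u]; exact hadj
          · right; right; right
            refine ⟨?_, ?_⟩
            · rw [← h, ← hp2u]
            · rw [← h, ← hp2u]; exact hadj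
        · have hp1u : p.1 = u := by rw [hg] at hgp; simpa [hcase] using hgp
          push_neg at hcase
          have hp1t : p.1 ∈ t := (hmemt p.1).mpr ⟨hp1, hcase⟩
          have hp2nt : p.2 ∉ t := by tauto
          have : p.2 = i ∨ p.2 = j := by
            have := (hmemt p.2).not.mp hp2nt
            tauto
          rcases this with h | h
          · left
            refine ⟨?_, ?_⟩
            · rw [← h, ← hp1u]
            · rw [← h, ← hp1u]; exact hadj
          · right; right; left
            refine ⟨?_, ?_⟩
            · rw [← h, ← hp1u]
            · rw [← h, ← hp1u]; exact hadj
      -- per-u bound for u ∈ t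
      have pair2 : ∀ (x y : Fin n × Fin n), ({x, y} : Finset (Fin n × Fin n)).card ≤ 2 :=
        fun x y => (Finset.card_insert_le _ _).trans (by simp)
      have perU : ∀ u ∈ t, (Ta.filter (fun p => g p = u)).card
          + (Tb.filter (fun p => g p = u)).card ≤ 4 := by
        intro u hu
        have hsA := fibstruct Ga inferInstance u hu
        have hsB := fibstruct Gb inferInstance u hu
        rw [← hTa] at hsA
        rw [← hTb] at hsB
        by_cases hb2 : Ga.Adj u j
        · have hnb1 : ¬ Ga.Adj u i := fun h => h1 i j u hij h hb2
          have hnb3 : ¬ Gb.Adj u i := fun h => h2 i j u hij h hb2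
          have sA : Ta.filter (fun p => g p = u) ⊆ {(u, j), (j, u)} := by
            intro p hp
            rcases hsA p hp with ⟨rfl, h⟩ | ⟨rfl, h⟩ | ⟨rfl, h⟩ | ⟨rfl, h⟩
            · exact absurd h hnb1
            · exact absurd h.symm hnb1
            · exact Finset.mem_insert_self _ _
            · exact Finset.mem_insert_of_mem (Finset.mem_singleton_self _)
          have sB : Tb.filter (fun p => g p = u) ⊆ {(u, j), (j, u)} := by
            intro p hp
            rcases hsB p hp with ⟨rfl, h⟩ | ⟨rfl, h⟩ | ⟨rfl, h⟩ | ⟨rfl, h⟩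
            · exact absurd h hnb3
            · exact absurd h.symm hnb3
            · exact Finset.mem_insert_self _ _
            · exact Finset.mem_insert_of_mem (Finset.mem_singleton_self _)
          have cA := (Finset.card_le_card sA).trans (pair2 _ _)
          have cB := (Finset.card_le_card sB).trans (pair2 _ _)
          omega
        · by_cases hb1 : Ga.Adj u i
          · have hnb4 : ¬ Gb.Adj u j := fun h => h3 i j u hij hb1 h
            have sA : Ta.filter (fun p => g p = u) ⊆ {(u, i), (i, u)} := by
              intro p hp
              rcases hsA p hp with ⟨rfl, h⟩ | ⟨rfl, h⟩ | ⟨rfl, h⟩ | ⟨rfl, h⟩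
              · exact Finset.mem_insert_self _ _
              · exact Finset.mem_insert_of_mem (Finset.mem_singleton_self _)
              · exact absurd h hb2
              · exact absurd h.symm hb2
            have sB : Tb.filter (fun p => g p = u) ⊆ {(u, i), (i, u)} := by
              intro p hp
              rcases hsB p hp with ⟨rfl, h⟩ | ⟨rfl, h⟩ | ⟨rfl, h⟩ | ⟨rfl, h⟩
              · exact Finset.mem_insert_self _ _
              · exact Finset.mem_insert_of_mem (Finset.mem_singleton_self _)
              · exact absurd h hnb4
              · exact absurd h.symm hnb4
            have cA := (Finset.card_le_card sA).trans (pair2 _ _)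
            have cB := (Finset.card_le_card sB).trans (pair2 _ _)
            omega
          · have sA : Ta.filter (fun p => g p = u) ⊆ (∅ : Finset (Fin n × Fin n)) := by
              intro p hp
              rcases hsA p hp with ⟨rfl, h⟩ | ⟨rfl, h⟩ | ⟨rfl, h⟩ | ⟨rfl, h⟩
              · exact absurd h hb1
              · exact absurd h.symm hb1
              · exact absurd h hb2
              · exact absurd h.symm hb2
            have sB : Tb.filter (fun p => g p = u) ⊆ {(u, i), (i, u)} ∪ {(u, j), (j, u)} := by
              intro p hp
              rcases hsB p hp with ⟨rfl, h⟩ | ⟨rfl, h⟩ | ⟨rfl, h⟩ | ⟨rfl, h⟩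
              · exact Finset.mem_union_left _ (Finset.mem_insert_self _ _)
              · exact Finset.mem_union_left _
                  (Finset.mem_insert_of_mem (Finset.mem_singleton_self _))
              · exact Finset.mem_union_right _ (Finset.mem_insert_self _ _)
              · exact Finset.mem_union_right _
                  (Finset.mem_insert_of_mem (Finset.mem_singleton_self _))
            have cA := Finset.card_le_card sA
            have cB : (Tb.filter (fun p => g p = u)).card ≤ 4 :=
              (Finset.card_le_card sB).trans ((Finset.card_union_le _ _).trans
                (Nat.add_le_add (pair2 _ _) (pair2 _ _)))
            rw [Finset.card_empty] at cA
            omega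
      -- fibers over i and j
      have fibij : ∀ (T : Finset (Fin n × Fin n)) (G : SimpleGraph (Fin n)),
          ∀ _ : DecidableRel G.Adj,
          T = ((s ×ˢ s).filter fun q => G.Adj q.1 q.2).filter
              (fun q => ¬(q.1 ∈ t ∧ q.2 ∈ t)) →
          (T.filter (fun p => g p = i)).card ≤ 1 ∧ (T.filter (fun p => g p = j)).card ≤ 1 := by
        intro T G hdec hT
        constructor
        · have : T.filter (fun p => g p = i) ⊆ {(j, i)} := by
            intro p hp
            rw [hT] at hp
            simp only [Finset.mem_filter, Finset.mem_product] at hp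
            obtain ⟨⟨⟨⟨hp1, hp2⟩, hadj⟩, hnt⟩, hgp⟩ := hp
            by_cases hcase : p.1 = i ∨ p.1 = j
            · have hp2i : p.2 = i := by rw [hg] at hgp; simpa [hcase] using hgp
              have hp1j : p.1 = j := by
                rcases hcase with h | h
                · exact absurd (h.trans hp2i.symm) hadj.ne
                · exact h
              simp [Prod.ext_iff, hp1j, hp2i]
            · have : p.1 = i := by rw [hg] at hgp; simpa [hcase] using hgp
              tauto
          exact (Finset.card_le_card this).trans (le_of_eq (Finset.card_singleton _))
        · have : T.filter (fun p => g p = j) ⊆ {(i, j)} := by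
            intro p hp
            rw [hT] at hp
            simp only [Finset.mem_filter, Finset.mem_product] at hp
            obtain ⟨⟨⟨⟨hp1, hp2⟩, hadj⟩, hnt⟩, hgp⟩ := hp
            by_cases hcase : p.1 = i ∨ p.1 = j
            · have hp2j : p.2 = j := by rw [hg] at hgp; simpa [hcase] using hgp
              have hp1i : p.1 = i := by
                rcases hcase with h | h
                · exact h
                · exact absurd (h.trans hp2j.symm) hadj.ne
              simp [Prod.ext_iff, hp1i, hp2j]
            · have : p.1 = j := by rw [hg] at hgp; simpa [hcase] using hgp
              tauto
          exact (Finset.card_le_card this).trans (le_of_eq (Finset.card_singleton _))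
      obtain ⟨cAi, cAj⟩ := fibij Ta Ga inferInstance hTa
      obtain ⟨cBi, cBj⟩ := fibij Tb Gb inferInstance hTb
      -- sum over s = sum over t + fiber i + fiber j
      have hsplit : ∀ (T : Finset (Fin n × Fin n)),
          ∑ u ∈ s, (T.filter (fun p => g p = u)).card
          = (∑ u ∈ t, (T.filter (fun p => g p = u)).card)
            + (T.filter (fun p => g p = i)).card + (T.filter (fun p => g p = j)).card := by
        intro T
        have hseq : s = insert i (insert j t) := by
          ext x
          simp only [Finset.mem_insert, hmemt]
          constructor
          · intro hx
            by_cases h1 : x = i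
            · left; exact h1
            · by_cases h2 : x = j
              · right; left; exact h2
              · right; right; exact ⟨hx, h1, h2⟩
          · rintro (rfl | rfl | ⟨hx, _⟩) <;> first | exact hi | exact hj | exact hx
        rw [hseq, Finset.sum_insert (by simp [hit, hne]), Finset.sum_insert hjt]
        ring
      have hTab : Ta.card + Tb.card ≤ 4 * (s.card - 1) := by
        rw [hfibA, hfibB, hsplit Ta, hsplit Tb]
        have hsum : (∑ u ∈ t, (Ta.filter (fun p => g p = u)).card)
            + (∑ u ∈ t, (Tb.filter (fun p => g p = u)).card) ≤ 4 * t.card := by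
          rw [← Finset.sum_add_distrib]
          calc _ ≤ ∑ _u ∈ t, 4 := Finset.sum_le_sum perU
            _ = 4 * t.card := by rw [Finset.sum_const]; ring
        have : t.card = s.card - 2 := htcard
        omega
      -- apply IH
      have iht := ih t (by omega)
      rw [decomp Ga inferInstance, decomp Gb inferInstance, ← hTa, ← hTb]
      have harith : 4 * (t.card * t.card / 4) + 4 * (s.card - 1) ≤ 4 * (s.card * s.card / 4) := by
        have h2' := helper2 (s.card - 2)
        have he : s.card - 2 + 2 = s.card := by omega
        rw [he] at h2'
        rw [htcard]
        omega
      omega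
    · -- no Ga edge in s
      have e1 : ((s ×ˢ s).filter fun p => Ga.Adj p.1 p.2) = ∅ := by
        apply Finset.filter_eq_empty_iff.mpr
        intro p hp
        rw [Finset.mem_product] at hp
        exact fun h => hA ⟨p.1, hp.1, p.2, hp.2, h⟩
      have e2 : ((s ×ˢ s).filter fun p => Gb.Adj p.1 p.2) ⊆ s.offDiag := by
        intro p hp
        simp only [Finset.mem_filter, Finset.mem_product] at hp
        exact Finset.mem_offDiag.mpr ⟨hp.1.1, hp.1.2, hp.2.ne⟩
      have h9 : s.offDiag.card ≤ 4 * (s.card * s.card / 4) := by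
        rw [Finset.offDiag_card]; exact helper s.card
      have := (Finset.card_le_card e2).trans h9
      rw [e1]
      simpa using this


lemma card_top3 : Nat.card (⊤ : SimpleGraph (Fin 3)).edgeSet = 3 := by
  rw [Nat.card_eq_fintype_card, ← SimpleGraph.edgeFinset_card]
  decide

lemma mem_qsupport {n : ℕ} {x : Fin n → ℕ} {k : Fin n} : k ∈ qsupport x ↔ x k ≠ 0 := by
  simp [qsupport]

lemma no_config {n q : ℕ}
    (H : Finset (Fin n → ℕ))
    (hfree : ¬ ContainsSCopy (q + 1) (⊤ : SimpleGraph (Fin 3)) H)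
    {i j u : Fin n} {x y z : Fin n → ℕ}
    (hij : i ≠ j) (hui : u ≠ i) (huj : u ≠ j)
    (hx : x ∈ H) (hy : y ∈ H) (hz : z ∈ H)
    (hsx : qsupport x = {i, j}) (hsy : qsupport y = {u, i}) (hsz : qsupport z = {u, j})
    (hxi : q + 1 ≤ x i + y i) (hxj : q + 1 ≤ x j + z j) (hyu : q + 1 ≤ y u + z u) :
    False := by
  apply hfree
  -- distinctness of x, y, z
  have hxy : x ≠ y := by
    intro h
    have : u ∈ qsupport x := by rw [h, hsy]; exact Finset.mem_insert_self _ _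
    rw [hsx] at this
    simp only [Finset.mem_insert, Finset.mem_singleton] at this
    tauto
  have hxz : x ≠ z := by
    intro h
    have : u ∈ qsupport x := by rw [h, hsz]; exact Finset.mem_insert_self _ _
    rw [hsx] at this
    simp only [Finset.mem_insert, Finset.mem_singleton] at this
    tauto
  have hyz : y ≠ z := by
    intro h
    have : i ∈ qsupport z := by
      rw [← h, hsy]; exact Finset.mem_insert_of_mem (Finset.mem_singleton_self _)
    rw [hsz] at this
    simp only [Finset.mem_insert, Finset.mem_singleton] at this
    rcases this with h' | h' <;> [exact hui h'.symm; exact hij h']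
  refine ⟨{x, y, z}, ?_, ![i, j, u], ?_, ?_, ?_, ?_⟩
  · intro w hw
    simp only [Finset.mem_insert, Finset.mem_singleton] at hw
    rcases hw with rfl | rfl | rfl <;> assumption
  · intro p r h
    fin_cases p <;> fin_cases r <;> simp_all
  · intro p r
    rw [SimpleGraph.top_adj]
    have hcard2 : ∀ w ∈ ({x, y, z} : Finset (Fin n → ℕ)), (qsupport w).card = 2 := by
      intro w hw
      simp only [Finset.mem_insert, Finset.mem_singleton] at hw
      rcases hw with rfl | rfl | rfl
      · rw [hsx]; exact Finset.card_pair hij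
      · rw [hsy]; exact Finset.card_pair hui
      · rw [hsz]; exact Finset.card_pair huj
    constructor
    · intro hpr
      fin_cases p <;> fin_cases r
      · exact absurd rfl hpr
      · exact ⟨x, by simp, hsx⟩
      · exact ⟨y, by simp, by rw [hsy]; exact Finset.pair_comm u i⟩
      · exact ⟨x, by simp, by rw [hsx]; exact Finset.pair_comm i j⟩
      · exact absurd rfl hpr
      · exact ⟨z, by simp, by rw [hsz]; exact Finset.pair_comm u j⟩
      · exact ⟨y, by simp, hsy⟩
      · exact ⟨z, by simp, hsz⟩
      · exact absurd rfl hpr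
    · rintro ⟨w, hw, hsw⟩ rfl
      have h2 := hcard2 w hw
      rw [hsw] at h2
      simp at h2
  · rw [card_top3]
    rw [Finset.card_insert_of_notMem (by simp [hxy, hxz]),
      Finset.card_insert_of_notMem (by simp [hyz]), Finset.card_singleton]
  · intro w hw w' hw' hne k hk hk'
    simp only [Finset.mem_insert, Finset.mem_singleton] at hw hw'
    have hkx : ∀ v : Fin n → ℕ, v k ≠ 0 → k ∈ qsupport v := fun v hv => mem_qsupport.mpr hv
    have mem_pair : ∀ (v : Fin n → ℕ) (c d : Fin n), v k ≠ 0 → qsupport v = {c, d} →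
        k = c ∨ k = d := by
      intro v c d hv hs
      have := hkx v hv
      rw [hs] at this
      simpa using this
    rcases hw with rfl | rfl | rfl <;> rcases hw' with rfl | rfl | rfl
    · exact absurd rfl hne
    · -- x, y : k = i
      have h1 := mem_pair _ _ _ hk hsx
      have h2 := mem_pair _ _ _ hk' hsy
      have hki : k = i := by
        rcases h2 with h2 | h2
        · rcases h1 with h1 | h1
          · exact h1
          · exact absurd (h2.symm.trans h1) huj
        · exact h2
      rw [hki]; exact hxi
    · -- x, z : k = j
      have h1 := mem_pair _ _ _ hk hsx
      have h2 := mem_pair _ _ _ hk' hsz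
      have hkj : k = j := by
        rcases h1 with h1 | h1
        · rcases h2 with h2 | h2
          · exact absurd (h2.symm.trans h1) hui
          · exact absurd (h1.symm.trans h2) hij
        · exact h1
      rw [hkj]; exact hxj
    · -- y, x : k = i
      have h1 := mem_pair _ _ _ hk hsy
      have h2 := mem_pair _ _ _ hk' hsx
      have hki : k = i := by
        rcases h1 with h1 | h1
        · rcases h2 with h2 | h2
          · exact absurd (h1.symm.trans h2) hui
          · exact absurd (h1.symm.trans h2) huj
        · exact h1
      rw [hki]; omega
    · exact absurd rfl hne
    · -- y, z : k = u
      have h1 := mem_pair _ _ _ hk hsy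
      have h2 := mem_pair _ _ _ hk' hsz
      have hku : k = u := by
        rcases h1 with h1 | h1
        · exact h1
        · rcases h2 with h2 | h2
          · exact h2
          · exact absurd (h1.symm.trans h2) hij
      rw [hku]; exact hyu
    · -- z, x : k = j
      have h1 := mem_pair _ _ _ hk hsz
      have h2 := mem_pair _ _ _ hk' hsx
      have hkj : k = j := by
        rcases h1 with h1 | h1
        · rcases h2 with h2 | h2
          · exact absurd (h1.symm.trans h2) hui
          · exact absurd (h1.symm.trans h2) huj
        · exact h1
      rw [hkj]; omega
    · -- z, y : k = u
      have h1 := mem_pair _ _ _ hk hsz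
      have h2 := mem_pair _ _ _ hk' hsy
      have hku : k = u := by
        rcases h1 with h1 | h1
        · exact h1
        · rcases h2 with h2 | h2
          · exact h2
          · exact absurd (h2.symm.trans h1) hij
      rw [hku]; omega
    · exact absurd rfl hne

/-- If `(q+1)/2 < a ≤ q` and `H` has no `(q+1)`-copy of the triangle, then
`|H_{a,a}| + |H_{ā,ā}| ≤ 2·⌊n²/4⌋` where `ā = q + 1 − a`. -/
theorem diag_pairs_bound (n q a : ℕ) (hq : 2 ≤ q) (ha : q + 1 < 2 * a) (haq : a ≤ q)
    (H : Finset (Fin n → ℕ)) (hH : H ⊆ Qset q n)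
    (hfree : ¬ ContainsSCopy (q + 1) (⊤ : SimpleGraph (Fin 3)) H) :
    Nat.card (pairGraph H a).edgeSet + Nat.card (pairGraph H (q + 1 - a)).edgeSet
      ≤ 2 * (n ^ 2 / 4) := by
  classical
  have extract : ∀ c : ℕ, ∀ i j : Fin n, (pairGraph H c).Adj i j →
      i ≠ j ∧ ∃ x ∈ H, qsupport x = {i, j} ∧ x i = c ∧ x j = c := by
    intro c i j hadj
    simp only [pairGraph, SimpleGraph.fromRel_adj] at hadj
    obtain ⟨hne, h | h⟩ := hadj
    · exact ⟨hne, h⟩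
    · obtain ⟨x, hxH, hs, hv1, hv2⟩ := h
      exact ⟨hne, x, hxH, by rw [hs]; exact Finset.pair_comm j i, hv2, hv1⟩
  set Ga := pairGraph H a with hGa
  set Gb := pairGraph H (q + 1 - a) with hGb
  have h1 : ∀ i j u, Ga.Adj i j → Ga.Adj u i → ¬ Ga.Adj u j := by
    intro i j u hij hui huj
    obtain ⟨hneij, x, hx, hsx, hxi, hxj⟩ := extract a i j hij
    obtain ⟨hneui, y, hy, hsy, hyu, hyi⟩ := extract a u i hui
    obtain ⟨hneuj, z, hz, hsz, hzu, hzj⟩ := extract a u j huj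
    exact no_config H hfree hneij hneui hneuj hx hy hz hsx hsy hsz
      (by omega) (by omega) (by omega)
  have h2 : ∀ i j u, Ga.Adj i j → Gb.Adj u i → ¬ Ga.Adj u j := by
    intro i j u hij hui huj
    obtain ⟨hneij, x, hx, hsx, hxi, hxj⟩ := extract a i j hij
    obtain ⟨hneui, y, hy, hsy, hyu, hyi⟩ := extract (q + 1 - a) u i hui
    obtain ⟨hneuj, z, hz, hsz, hzu, hzj⟩ := extract a u j huj
    exact no_config H hfree hneij hneui hneuj hx hy hz hsx hsy hsz
      (by omega) (by omega) (by omega)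
  have h3 : ∀ i j u, Ga.Adj i j → Ga.Adj u i → ¬ Gb.Adj u j := by
    intro i j u hij hui huj
    obtain ⟨hneij, x, hx, hsx, hxi, hxj⟩ := extract a i j hij
    obtain ⟨hneui, y, hy, hsy, hyu, hyi⟩ := extract a u i hui
    obtain ⟨hneuj, z, hz, hsz, hzu, hzj⟩ := extract (q + 1 - a) u j huj
    exact no_config H hfree hneij hneui hneuj hx hy hz hsx hsy hsz
      (by omega) (by omega) (by omega)
  have key := key_count Ga Gb h1 h2 h3 n Finset.univ
    (by rw [Finset.card_univ, Fintype.card_fin])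
  have conv : ∀ (G : SimpleGraph (Fin n)), ∀ _ : DecidableRel G.Adj,
      (((Finset.univ ×ˢ Finset.univ : Finset (Fin n × Fin n))).filter
        fun p => G.Adj p.1 p.2).card = 2 * Nat.card G.edgeSet := by
    intro G inst
    rw [Nat.card_eq_fintype_card, ← SimpleGraph.edgeFinset_card,
      SimpleGraph.two_mul_card_edgeFinset, Finset.univ_product_univ]
  rw [conv Ga inferInstance, conv Gb inferInstance, Finset.card_univ, Fintype.card_fin] at key
  have hnn : n ^ 2 = n * n := sq n
  omega
end

section
/- For n = 3 and any q ≥ 2, ex(3, K₃, q) = 2q². Equivalently, the set of all 3q² q-edges in Q(3,2) can be partitioned into q² triples each forming a (q+1)-copy of a triangle, and a maximum (q+1)-triangle-free subset contains exactly two q-edges from each triple. -/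
open Finset

/-!
For `a, b, c ∈ [1, q]` the q-edges `(a, b)` on `{0, 1}`, `(q + 1 - b, c)` on `{1, 2}` and
`(q + 1 - c, q + 1 - a)` on `{2, 0}` form a `(q + 1)`-triangle, every shared coordinate summing to
exactly `q + 1`. Taking `c ≡ a + b (mod q)`, a Latin square in `a` and `b`, these `q²` triangles
cover `Q(3,2)`, so a `(q + 1)`-triangle-free family meets each in at most two q-edges and has at
most `2q²` elements. Conversely, the `2q²` q-edges whose support contains `2` contain no triangle
at all, since a triangle needs an edge avoiding any given coordinate.
-/

lemma mem_Qset_iff {q n : ℕ} {x : Fin n → ℕ} :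
    x ∈ Qset q n ↔ (∀ i, x i ≤ q) ∧ #(qsupport x) = 2 := by
  simp only [Qset, mem_filter, mem_image, mem_univ, true_and, and_congr_left_iff]
  refine fun _ => ⟨?_, fun h => ⟨fun i => ⟨x i, Nat.lt_succ_of_le (h i)⟩, rfl⟩⟩
  rintro ⟨f, rfl⟩ i
  exact Nat.lt_succ_iff.mp (f i).isLt

section qedge

variable {n : ℕ} {i j : Fin n} {a b : ℕ}

lemma qsupport_qedge (hij : i ≠ j) (ha : a ≠ 0) (hb : b ≠ 0) :
    qsupport (qedge i j a b) = {i, j} := by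
  ext k
  rw [qsupport, mem_filter]
  by_cases hi : k = i <;> by_cases hj : k = j <;> simp_all [qedge]

lemma qedge_comm (hij : i ≠ j) : qedge i j a b = qedge j i b a := by
  funext k
  by_cases hi : k = i <;> by_cases hj : k = j <;> simp_all [qedge]

lemma qedge_mem_Qset {q : ℕ} (hij : i ≠ j) (ha : 0 < a) (ha' : a ≤ q) (hb : 0 < b)
    (hb' : b ≤ q) :
    qedge i j a b ∈ Qset q n := by
  refine mem_Qset_iff.mpr ⟨fun k => ?_, ?_⟩
  · unfold qedge; split_ifs <;> omega
  · rw [qsupport_qedge hij ha.ne' hb.ne', card_pair hij]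

lemma eq_qedge_of_qsupport_eq {x : Fin n → ℕ} (hx : qsupport x = {i, j}) :
    x = qedge i j (x i) (x j) := by
  funext k
  unfold qedge
  split_ifs with hi hj
  · rw [hi]
  · rw [hj]
  · have hk : k ∉ qsupport x := by simp [hx, hi, hj]
    simpa [qsupport] using hk

lemma exists_qedge_of_mem_Qset {q : ℕ} {x : Fin n → ℕ} (hx : x ∈ Qset q n) :
    ∃ i j : Fin n, i ≠ j ∧ ∃ a b, 0 < a ∧ a ≤ q ∧ 0 < b ∧ b ≤ q ∧ x = qedge i j a b := by
  obtain ⟨hle, hcard⟩ := mem_Qset_iff.mp hx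
  obtain ⟨i, j, hij, hs⟩ := card_eq_two.mp hcard
  have hpos : ∀ k ∈ qsupport x, 0 < x k := fun k hk =>
    Nat.pos_of_ne_zero (mem_filter.mp hk).2
  exact ⟨i, j, hij, x i, x j, hpos i (by simp [hs]), hle i, hpos j (by simp [hs]), hle j,
    eq_qedge_of_qsupport_eq hs⟩

end qedge

lemma exists_cyclic_qedge_of_mem_Qset {q : ℕ} {x : Fin 3 → ℕ} (hx : x ∈ Qset q 3) :
    ∃ a b, 0 < a ∧ a ≤ q ∧ 0 < b ∧ b ≤ q ∧
      (x = qedge 0 1 a b ∨ x = qedge 1 2 a b ∨ x = qedge 2 0 a b) := by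
  obtain ⟨i, j, hij, a, b, ha, ha', hb, hb', rfl⟩ := exists_qedge_of_mem_Qset hx
  fin_cases i <;> fin_cases j <;>
    simp only [Fin.isValue, Fin.zero_eta, Fin.mk_one, Fin.reduceFinMk] at hij ⊢ <;> first
    | exact absurd rfl hij
    | exact ⟨a, b, ha, ha', hb, hb', by simp⟩
    | exact ⟨b, a, hb, hb', ha, ha', by rw [qedge_comm hij]; simp⟩

lemma not_containsSCopy_top_of_ne_zero {n s : ℕ} {H : Finset (Fin n → ℕ)} (k : Fin n)
    (hH : ∀ x ∈ H, x k ≠ 0) : ¬ ContainsSCopy s (⊤ : SimpleGraph (Fin 3)) H := by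
  rintro ⟨H', hH', ι, hι, hadj, -⟩
  have hpair : ∃ u v, u ≠ v ∧ ι u ≠ k ∧ ι v ≠ k := by
    by_cases h0 : ι 0 = k
    · exact ⟨1, 2, by decide, h0 ▸ hι.ne (by decide), h0 ▸ hι.ne (by decide)⟩
    by_cases h1 : ι 1 = k
    · exact ⟨0, 2, by decide, h0, h1 ▸ hι.ne (by decide)⟩
    · exact ⟨0, 1, by decide, h0, h1⟩
  obtain ⟨u, v, huv, hu, hv⟩ := hpair
  obtain ⟨x, hx, hs⟩ := (hadj u v).mp huv
  have hk : k ∈ qsupport x := by simpa [qsupport] using hH x (hH' hx)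
  simp [hs, hu.symm, hv.symm] at hk

def triangleTriple (q a b c : ℕ) : Finset (Fin 3 → ℕ) :=
  {qedge 0 1 a b, qedge 1 2 (q + 1 - b) c, qedge 2 0 (q + 1 - c) (q + 1 - a)}

lemma card_triangleTriple {q a b c : ℕ} (ha : 0 < a) (ha' : a ≤ q) (hc' : c ≤ q) :
    #(triangleTriple q a b c) = 3 := by
  refine card_eq_three.mpr ⟨_, _, _, fun h => ?_, fun h => ?_, fun h => ?_, rfl⟩
  · have := congrFun h 0; simp [qedge] at this; omega
  · have := congrFun h 2; simp [qedge] at this; omega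
  · have := congrFun h 0; simp [qedge] at this; omega

section triangleTriple

variable {q a b c : ℕ} (ha : 0 < a) (ha' : a ≤ q) (hb : 0 < b) (hb' : b ≤ q)
  (hc : 0 < c) (hc' : c ≤ q)
include ha ha' hb hb' hc hc'

lemma image_qsupport_triangleTriple :
    (triangleTriple q a b c).image qsupport = {{0, 1}, {1, 2}, {2, 0}} := by
  simp only [triangleTriple, image_insert, image_singleton]
  rw [qsupport_qedge (by decide) (by omega) (by omega), qsupport_qedge (by decide) (by omega)
    (by omega), qsupport_qedge (by decide) (by omega) (by omega)]

lemma isSCopy_triangleTriple :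
    IsSCopy (q + 1) (⊤ : SimpleGraph (Fin 3)) (triangleTriple q a b c) := by
  refine ⟨id, Function.injective_id, fun u v => ?_, ?_, ?_⟩
  · rw [SimpleGraph.top_adj, id, id, ← mem_image (f := qsupport),
      image_qsupport_triangleTriple ha ha' hb hb' hc hc']
    revert u v
    decide
  · rw [card_triangleTriple ha ha' hc', Nat.card_eq_fintype_card]
    decide
  · intro x hx y hy hxy i hxi hyi
    simp only [triangleTriple, mem_insert, mem_singleton] at hx hy
    rcases hx with rfl | rfl | rfl <;> rcases hy with rfl | rfl | rfl <;>
      fin_cases i <;> simp [qedge] at hxy hxi hyi ⊢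
    all_goals omega

lemma card_inter_triangleTriple_le_two {H : Finset (Fin 3 → ℕ)}
    (hfree : ¬ ContainsSCopy (q + 1) (⊤ : SimpleGraph (Fin 3)) H) :
    #(H ∩ triangleTriple q a b c) ≤ 2 := by
  by_contra! h
  have hsub : triangleTriple q a b c ⊆ H := by
    have heq := eq_of_subset_of_card_le (inter_subset_right (s₁ := H))
      (by rw [card_triangleTriple (b := b) ha ha' hc']; omega)
    exact heq ▸ inter_subset_left
  exact hfree ⟨_, hsub, isSCopy_triangleTriple ha ha' hb hb' hc hc'⟩

end triangleTriple

def cyclicTriangle (q : ℕ) (p : ℕ × ℕ) : Finset (Fin 3 → ℕ) :=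
  triangleTriple q (p.1 + 1) (p.2 + 1) ((p.1 + p.2) % q + 1)

lemma mod_add_mod_eq_of_add_eq {q m k r t : ℕ} (h : m + k = r + q * t) (hr : r < q) :
    (m % q + k) % q = r := by
  rw [Nat.mod_add_mod, h, Nat.add_mul_mod_self_left, Nat.mod_eq_of_lt hr]

lemma exists_mem_cyclicTriangle {q : ℕ} {x : Fin 3 → ℕ} (hx : x ∈ Qset q 3) :
    ∃ p ∈ range q ×ˢ range q, x ∈ cyclicTriangle q p := by
  obtain ⟨a, b, ha, ha', hb, hb', hx | hx | hx⟩ := exists_cyclic_qedge_of_mem_Qset hx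
  · refine ⟨(a - 1, b - 1), by simp; omega, ?_⟩
    simp [cyclicTriangle, triangleTriple, hx, Nat.sub_add_cancel ha, Nat.sub_add_cancel hb]
  · have hc : ((b - 1 + a) % q + (q - a)) % q = b - 1 :=
      mod_add_mod_eq_of_add_eq (t := 1) (by omega) (by omega)
    refine ⟨((b - 1 + a) % q, q - a), by
      simp only [mem_product, mem_range]; exact ⟨Nat.mod_lt _ (by omega), by omega⟩, ?_⟩
    simp only [cyclicTriangle, triangleTriple, hc, mem_insert, mem_singleton]
    right; left
    rw [hx]; congr 1 <;> omega
  · have hc : (q - b + (q - a + b) % q) % q = q - a := by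
      rw [Nat.add_comm]
      exact mod_add_mod_eq_of_add_eq (t := 1) (by omega) (by omega)
    refine ⟨(q - b, (q - a + b) % q), by
      simp only [mem_product, mem_range]; exact ⟨by omega, Nat.mod_lt _ (by omega)⟩, ?_⟩
    simp only [cyclicTriangle, triangleTriple, hc, mem_insert, mem_singleton]
    right; right
    rw [hx]; congr 1 <;> omega

lemma card_le_of_not_containsSCopy {q : ℕ} {H : Finset (Fin 3 → ℕ)} (hH : H ⊆ Qset q 3)
    (hfree : ¬ ContainsSCopy (q + 1) (⊤ : SimpleGraph (Fin 3)) H) : #H ≤ 2 * q ^ 2 := by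
  have hcover : H ⊆ (range q ×ˢ range q).biUnion (fun p => H ∩ cyclicTriangle q p) := by
    intro x hx
    obtain ⟨p, hp, hxp⟩ := exists_mem_cyclicTriangle (hH hx)
    exact mem_biUnion.mpr ⟨p, hp, mem_inter.mpr ⟨hx, hxp⟩⟩
  have hpiece : ∀ p ∈ range q ×ˢ range q, #(H ∩ cyclicTriangle q p) ≤ 2 := by
    intro p hp
    simp only [mem_product, mem_range] at hp
    exact card_inter_triangleTriple_le_two (by omega) (by omega) (by omega) (by omega)
      (by omega) (Nat.mod_lt _ (by omega)) hfree
  calc #H ≤ #(range q ×ˢ range q) * 2 :=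
        (card_le_card hcover).trans (card_biUnion_le_card_mul _ _ 2 hpiece)
    _ = 2 * q ^ 2 := by rw [card_product, card_range]; ring

def qedgesOn (q : ℕ) {n : ℕ} (i j : Fin n) : Finset (Fin n → ℕ) :=
  (Icc 1 q ×ˢ Icc 1 q).image (fun p => qedge i j p.1 p.2)

lemma card_qedgesOn (q : ℕ) {n : ℕ} {i j : Fin n} (hij : i ≠ j) :
    #(qedgesOn q i j) = q ^ 2 := by
  rw [qedgesOn, card_image_of_injective, card_product, Nat.card_Icc, sq, Nat.add_sub_cancel]
  intro p p' h
  have hi := congrFun h i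
  have hj := congrFun h j
  simp only [qedge, if_neg hij.symm] at hi hj
  exact Prod.ext hi hj

lemma exists_not_containsSCopy_card_eq (q : ℕ) :
    ∃ H ⊆ Qset q 3, ¬ ContainsSCopy (q + 1) (⊤ : SimpleGraph (Fin 3)) H ∧ #H = 2 * q ^ 2 := by
  have hmem : ∀ x ∈ qedgesOn q 1 2 ∪ qedgesOn q 2 0, x ∈ Qset q 3 ∧ x 2 ≠ 0 := by
    intro x hx
    simp only [qedgesOn, mem_union, mem_image, mem_product, mem_Icc] at hx
    rcases hx with ⟨p, hp, rfl⟩ | ⟨p, hp, rfl⟩ <;>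
      exact ⟨qedge_mem_Qset (by decide) (by omega) (by omega) (by omega) (by omega),
        by simp [qedge]; omega⟩
  refine ⟨_, fun x hx => (hmem x hx).1, not_containsSCopy_top_of_ne_zero 2 fun x hx =>
    (hmem x hx).2, ?_⟩
  rw [card_union_of_disjoint, card_qedgesOn q (by decide), card_qedgesOn q (by decide), two_mul]
  refine disjoint_left.mpr fun x hx hx' => ?_
  simp only [qedgesOn, mem_image, mem_product, mem_Icc] at hx hx'
  obtain ⟨p, hp, rfl⟩ := hx
  obtain ⟨p', hp', he⟩ := hx'
  have := congrFun he 0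
  simp [qedge] at this
  omega

theorem exQ_triangle_n3_general (q : ℕ) :
    exQ 3 (⊤ : SimpleGraph (Fin 3)) q (q + 1) = 2 * q ^ 2 := by
  refine IsGreatest.csSup_eq ⟨?_, ?_⟩
  · obtain ⟨H, hH, hfree, hcard⟩ := exists_not_containsSCopy_card_eq q
    exact ⟨H, hH, hfree, hcard.symm⟩
  · rintro m ⟨H, hH, hfree, rfl⟩
    exact card_le_of_not_containsSCopy hH hfree

/-- `ex(3, K₃, q) = 2q²` for every `q ≥ 2`. -/
theorem exQ_triangle_n3 (q : ℕ) (hq : 2 ≤ q) :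
    exQ 3 (⊤ : SimpleGraph (Fin 3)) q (q + 1) = 2 * q ^ 2 :=
  exQ_triangle_n3_general q
end
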